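/- A symmetric Laurent polynomial f ∈ K[T₁^{±1},…,T_n^{±1}]^{S_n}, when evaluated at (c₁X₁,…,c₁X_{n₁}, c₂Y₁,…,c₂Y_{n₂}) with c₁, c₂ ∈ K^×, yields an element of K[X₁^{±1},…,X_{n₁}^{±1}]^{S_{n₁}} ⊗_K K[Y₁^{±1},…,Y_{n₂}^{±1}]^{S_{n₂}}, i.e., the substitution map restricted to S_n-invariants lands in the tensor product of invariant subrings. Moreover this restricted map θ is injective. -/

import Mathlib

open Finset
open scoped TensorProduct

/-- The additive automorphism of `ℤⁿ` permuting the coordinates by `σ`. -/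
def permAddEquiv (n : ℕ) (σ : Equiv.Perm (Fin n)) : (Fin n → ℤ) ≃+ (Fin n → ℤ) :=
  { Equiv.piCongrLeft' (fun _ => ℤ) σ with map_add' := fun _ _ => rfl }

/-- The action of `σ ∈ Sₙ` on the Laurent polynomial ring `K[ℤⁿ]`, permuting the variables. -/
noncomputable def permAct (K : Type*) [CommSemiring K] (n : ℕ) (σ : Equiv.Perm (Fin n)) :
    AddMonoidAlgebra K (Fin n → ℤ) ≃ₐ[K] AddMonoidAlgebra K (Fin n → ℤ) :=
  AddMonoidAlgebra.domCongr K K (permAddEquiv n σ)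

/-- The subalgebra `K[X₁^{±1},…,Xₙ^{±1}]^{Sₙ}` of symmetric Laurent polynomials. -/
noncomputable def symmSub (K : Type*) [CommSemiring K] (n : ℕ) :
    Subalgebra K (AddMonoidAlgebra K (Fin n → ℤ)) where
  carrier := {f | ∀ σ : Equiv.Perm (Fin n), permAct K n σ f = f}
  mul_mem' {a b} ha hb σ := by rw [map_mul, ha σ, hb σ]
  add_mem' {a b} ha hb σ := by rw [map_add, ha σ, hb σ]
  algebraMap_mem' r σ := by rw [AlgEquiv.commutes]

/-!
In the monomial basis `X^x ⊗ Y^y` of `K[ℤ^{n₁}] ⊗ K[ℤ^{n₂}]`, `θ` sends `T^a` to a nonzero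
multiple of `X^x ⊗ Y^y`, where `(x, y)` is `a` split into its first `n₁` and last `n₂`
coordinates; since splitting is a bijection, `θ` is injective. For symmetric `f` the coefficient
of `X^x ⊗ Y^y` in `θ f` is unchanged when `x` and `y` are permuted separately (a block
permutation of `a`, which also preserves the weight `c₁^{|x|} c₂^{|y|}`). So it is constant on
products of orbits, and `θ f` is a linear combination of the products `m_x ⊗ m_y` of orbit sums,
which lie in the tensor product of the invariant subrings.
-/

theorem Module.Basis.mem_of_repr_eq_on_blocks {ι R M : Type*} [Semiring R] [AddCommMonoid M]
    [Module R M] (b : Module.Basis ι R M) (W : Submodule R M) (O : ι → Finset ι)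
    (self_mem : ∀ i, i ∈ O i) (eq_of_mem : ∀ i, ∀ j ∈ O i, O j = O i)
    (hW : ∀ i, ∑ j ∈ O i, b j ∈ W) {v : M} (hv : ∀ i, ∀ j ∈ O i, b.repr v j = b.repr v i) :
    v ∈ W := by
  classical
  have mem_iff : ∀ i k, ∀ j ∈ O k, (j ∈ O i ↔ k ∈ O i) := fun i k j hj => by
    constructor
    · intro hji; rw [← eq_of_mem i j hji, eq_of_mem k j hj]; exact self_mem k
    · intro hki; rw [← eq_of_mem i k hki]; exact hj
  induction hn : (b.repr v).support.card using Nat.strong_induction_on generalizing v with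
  | _ n ih =>
  obtain hv0 | ⟨i, hi⟩ := (b.repr v).support.eq_empty_or_nonempty
  · rw [Finsupp.support_eq_empty, LinearEquiv.map_eq_zero_iff] at hv0
    exact hv0 ▸ W.zero_mem
  set g := b.repr v
  -- Split off the block of `i`: what remains is still constant on blocks, with smaller support.
  set v' := b.repr.symm (g.filter (· ∉ O i))
  have hv' : b.repr v' = g.filter (· ∉ O i) := b.repr.apply_symm_apply _
  have hsplit : v = v' + g i • ∑ j ∈ O i, b j := by
    apply b.repr.injective
    ext j
    by_cases hj : j ∈ O i
    · simp [hv', Finsupp.single_apply, hj, g, hv i j hj]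
    · simp [hv', Finsupp.single_apply, hj, g]
  rw [hsplit]
  refine W.add_mem (ih _ ?_ (fun k j hj => ?_) rfl) (W.smul_mem _ (hW i))
  · rw [← hn, hv', Finsupp.support_filter]
    exact Finset.card_lt_card (Finset.filter_ssubset.2 ⟨i, hi, not_not.2 (self_mem i)⟩)
  · simp only [hv', Finsupp.filter_apply, mem_iff i k j hj, hv k j hj]

theorem permAddEquiv_symm_apply (n : ℕ) (σ : Equiv.Perm (Fin n)) (a : Fin n → ℤ) :
    (permAddEquiv n σ).symm a = a ∘ σ :=
  (permAddEquiv n σ).symm_apply_eq.2 (funext fun k => congrArg a (σ.apply_symm_apply k).symm)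

theorem mem_symmSub_iff {K : Type*} [CommSemiring K] {n : ℕ}
    {f : AddMonoidAlgebra K (Fin n → ℤ)} :
    f ∈ symmSub K n ↔ ∀ (σ : Equiv.Perm (Fin n)) (a : Fin n → ℤ), f.coeff (a ∘ σ) = f.coeff a := by
  refine forall_congr' fun σ => ?_
  rw [← AddMonoidAlgebra.coeff_inj, Finsupp.ext_iff]
  refine forall_congr' fun a => ?_
  rw [permAct, AddMonoidAlgebra.coeff_domCongr, permAddEquiv_symm_apply]

section PermOrbit

variable {α : Type*} [DecidableEq α] {n : ℕ}

def permOrbit (n : ℕ) (x : Fin n → α) : Finset (Fin n → α) :=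
  univ.image fun σ : Equiv.Perm (Fin n) => x ∘ σ

theorem mem_permOrbit {x y : Fin n → α} :
    y ∈ permOrbit n x ↔ ∃ σ : Equiv.Perm (Fin n), x ∘ σ = y := by
  simp [permOrbit]

theorem comp_mem_permOrbit (x : Fin n → α) (σ : Equiv.Perm (Fin n)) :
    x ∘ σ ∈ permOrbit n x :=
  mem_permOrbit.2 ⟨σ, rfl⟩

theorem self_mem_permOrbit (x : Fin n → α) : x ∈ permOrbit n x :=
  comp_mem_permOrbit x 1

theorem permOrbit_eq_of_mem {x y : Fin n → α} (h : y ∈ permOrbit n x) :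
    permOrbit n y = permOrbit n x := by
  obtain ⟨σ, rfl⟩ := mem_permOrbit.1 h
  ext z
  simp only [mem_permOrbit]
  constructor
  · rintro ⟨τ, rfl⟩; exact ⟨σ * τ, rfl⟩
  · rintro ⟨τ, rfl⟩; exact ⟨σ⁻¹ * τ, by ext; simp⟩

theorem mem_permOrbit_iff_eq {x y : Fin n → α} :
    y ∈ permOrbit n x ↔ permOrbit n y = permOrbit n x :=
  ⟨permOrbit_eq_of_mem, fun h => h ▸ self_mem_permOrbit y⟩

theorem permOrbit_comp (x : Fin n → α) (σ : Equiv.Perm (Fin n)) :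
    permOrbit n (x ∘ σ) = permOrbit n x :=
  permOrbit_eq_of_mem (comp_mem_permOrbit x σ)

end PermOrbit

/-- The monomial symmetric Laurent polynomial `m_x`. -/
noncomputable def permOrbitSum (K : Type*) [CommSemiring K] (n : ℕ) (x : Fin n → ℤ) :
    AddMonoidAlgebra K (Fin n → ℤ) :=
  ∑ y ∈ permOrbit n x, AddMonoidAlgebra.single y 1

theorem permOrbitSum_mem_symmSub (K : Type*) [CommSemiring K] {n : ℕ} (x : Fin n → ℤ) :
    permOrbitSum K n x ∈ symmSub K n := by
  classical
  have comp_mem_iff : ∀ (σ : Equiv.Perm (Fin n)) a, a ∘ σ ∈ permOrbit n x ↔ a ∈ permOrbit n x :=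
    fun σ a => by rw [mem_permOrbit_iff_eq, permOrbit_comp, ← mem_permOrbit_iff_eq]
  rw [mem_symmSub_iff]
  intro σ a
  simp [permOrbitSum, AddMonoidAlgebra.coeff_sum, AddMonoidAlgebra.coeff_single,
    Finsupp.single_apply, comp_mem_iff]

noncomputable def tensorBasis (K : Type*) [Field K] (n₁ n₂ : ℕ) :
    Module.Basis ((Fin n₁ → ℤ) × (Fin n₂ → ℤ)) K
      (AddMonoidAlgebra K (Fin n₁ → ℤ) ⊗[K] AddMonoidAlgebra K (Fin n₂ → ℤ)) :=
  (AddMonoidAlgebra.basis _ K).tensorProduct (AddMonoidAlgebra.basis _ K)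

section Substitution

variable {K : Type*} [Field K] {n₁ n₂ : ℕ}

theorem tensorBasis_apply (p : (Fin n₁ → ℤ) × (Fin n₂ → ℤ)) :
    tensorBasis K n₁ n₂ p = AddMonoidAlgebra.single p.1 1 ⊗ₜ AddMonoidAlgebra.single p.2 1 := by
  rw [tensorBasis, Module.Basis.tensorProduct_apply]
  rfl

def substWeight (c₁ c₂ : Kˣ) (p : (Fin n₁ → ℤ) × (Fin n₂ → ℤ)) : Kˣ :=
  c₁ ^ (∑ i, p.1 i) * c₂ ^ (∑ j, p.2 j)

/-- `θ` is the substitution `Tᵢ ↦ c₁Xᵢ`, `T_{n₁+j} ↦ c₂Yⱼ`, described on monomials. -/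
def IsSubstitution (c₁ c₂ : Kˣ) (θ : AddMonoidAlgebra K (Fin (n₁ + n₂) → ℤ) →ₗ[K]
      AddMonoidAlgebra K (Fin n₁ → ℤ) ⊗[K] AddMonoidAlgebra K (Fin n₂ → ℤ)) : Prop :=
  ∀ a, θ (AddMonoidAlgebra.single a 1) =
    (substWeight c₁ c₂ ((Fin.appendEquiv n₁ n₂).symm a) : K) •
      (AddMonoidAlgebra.single ((Fin.appendEquiv n₁ n₂).symm a).1 1 ⊗ₜ
        AddMonoidAlgebra.single ((Fin.appendEquiv n₁ n₂).symm a).2 1)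

theorem sum_tensorBasis_permOrbit_product (x : Fin n₁ → ℤ) (y : Fin n₂ → ℤ) :
    ∑ q ∈ permOrbit n₁ x ×ˢ permOrbit n₂ y, tensorBasis K n₁ n₂ q =
      permOrbitSum K n₁ x ⊗ₜ permOrbitSum K n₂ y := by
  simp [Finset.sum_product, tensorBasis_apply, permOrbitSum, TensorProduct.sum_tmul,
    TensorProduct.tmul_sum, Finset.sum_comm (s := permOrbit n₁ x)]

theorem tmul_permOrbitSum_mem_range (x : Fin n₁ → ℤ) (y : Fin n₂ → ℤ) :
    permOrbitSum K n₁ x ⊗ₜ permOrbitSum K n₂ y ∈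
      (Algebra.TensorProduct.map (symmSub K n₁).val (symmSub K n₂).val).range :=
  ⟨⟨_, permOrbitSum_mem_symmSub K x⟩ ⊗ₜ ⟨_, permOrbitSum_mem_symmSub K y⟩, rfl⟩

namespace IsSubstitution

variable {c₁ c₂ : Kˣ} {θ : AddMonoidAlgebra K (Fin (n₁ + n₂) → ℤ) →ₗ[K]
      AddMonoidAlgebra K (Fin n₁ → ℤ) ⊗[K] AddMonoidAlgebra K (Fin n₂ → ℤ)}

theorem repr_apply (hθ : IsSubstitution c₁ c₂ θ) (f : AddMonoidAlgebra K (Fin (n₁ + n₂) → ℤ))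
    (p : (Fin n₁ → ℤ) × (Fin n₂ → ℤ)) :
    (tensorBasis K n₁ n₂).repr (θ f) p =
      substWeight c₁ c₂ p * f.coeff (Fin.appendEquiv n₁ n₂ p) := by
  classical
  induction f using AddMonoidAlgebra.induction_linear with
  | zero => simp
  | add f g hf hg => simp [hf, hg, mul_add]
  | single a r =>
    have hsingle : AddMonoidAlgebra.single a r = r • AddMonoidAlgebra.single a (1 : K) := by simp
    rw [hsingle, map_smul, hθ a, ← tensorBasis_apply]
    simp only [map_smul, Module.Basis.repr_self, Finsupp.smul_apply, Finsupp.single_apply,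
      Equiv.symm_apply_eq, AddMonoidAlgebra.coeff_smul, AddMonoidAlgebra.coeff_single, smul_eq_mul]
    split_ifs with h
    · rw [h, Equiv.symm_apply_apply]; ring
    · simp

theorem injective (hθ : IsSubstitution c₁ c₂ θ) : Function.Injective θ := by
  refine (injective_iff_map_eq_zero θ).2 fun f hf => ?_
  ext a
  have := hθ.repr_apply f ((Fin.appendEquiv n₁ n₂).symm a)
  rw [Equiv.apply_symm_apply, hf, map_zero, Finsupp.zero_apply] at this
  simpa using this.symm

theorem repr_comp_perm (hθ : IsSubstitution c₁ c₂ θ)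
    {f : AddMonoidAlgebra K (Fin (n₁ + n₂) → ℤ)} (hf : f ∈ symmSub K (n₁ + n₂))
    (σ₁ : Equiv.Perm (Fin n₁)) (σ₂ : Equiv.Perm (Fin n₂)) (x : Fin n₁ → ℤ) (y : Fin n₂ → ℤ) :
    (tensorBasis K n₁ n₂).repr (θ f) (x ∘ σ₁, y ∘ σ₂) =
      (tensorBasis K n₁ n₂).repr (θ f) (x, y) := by
  have hweight : substWeight c₁ c₂ (x ∘ σ₁, y ∘ σ₂) = substWeight c₁ c₂ (x, y) := by
    simp only [substWeight, Function.comp_apply, Equiv.sum_comp]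
  have happend : Fin.appendEquiv n₁ n₂ (x ∘ σ₁, y ∘ σ₂) =
      Fin.appendEquiv n₁ n₂ (x, y) ∘ finSumFinEquiv.permCongr (σ₁.sumCongr σ₂) := by
    ext k
    induction k using Fin.addCases <;> simp [Equiv.permCongr_apply]
  rw [hθ.repr_apply, hθ.repr_apply, hweight, happend, mem_symmSub_iff.1 hf]

theorem mem_range_of_mem_symmSub (hθ : IsSubstitution c₁ c₂ θ)
    {f : AddMonoidAlgebra K (Fin (n₁ + n₂) → ℤ)} (hf : f ∈ symmSub K (n₁ + n₂)) :
    θ f ∈ (Algebra.TensorProduct.map (symmSub K n₁).val (symmSub K n₂).val).range := by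
  rw [← Subalgebra.mem_toSubmodule]
  refine (tensorBasis K n₁ n₂).mem_of_repr_eq_on_blocks (Subalgebra.toSubmodule _)
    (fun q => permOrbit n₁ q.1 ×ˢ permOrbit n₂ q.2)
    (fun q => mem_product.2 ⟨self_mem_permOrbit _, self_mem_permOrbit _⟩)
    (fun q r hr => ?_) (fun q => ?_) (fun q r hr => ?_)
  · rw [mem_product] at hr
    rw [permOrbit_eq_of_mem hr.1, permOrbit_eq_of_mem hr.2]
  · rw [sum_tensorBasis_permOrbit_product]
    exact tmul_permOrbitSum_mem_range q.1 q.2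
  · obtain ⟨⟨σ₁, h₁⟩, ⟨σ₂, h₂⟩⟩ := And.imp mem_permOrbit.1 mem_permOrbit.1 (mem_product.1 hr)
    rw [← Prod.mk.eta (p := r), ← h₁, ← h₂]
    exact hθ.repr_comp_perm hf σ₁ σ₂ q.1 q.2

end IsSubstitution

end Substitution

/-- The substitution `Tᵢ ↦ c₁Xᵢ` (`i ≤ n₁`), `Tᵢ ↦ c₂Y_{i−n₁}` (`i > n₁`), restricted to
`Sₙ`-invariant Laurent polynomials, takes values in the tensor product of the `S_{n₁}`- and
`S_{n₂}`-invariant subrings, and this restricted map `θ` is injective. -/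
theorem substitution_lands_in_invariants_and_injective
    (K : Type*) [Field K] (n₁ n₂ : ℕ) (c₁ c₂ : Kˣ)
    (θ : AddMonoidAlgebra K (Fin (n₁ + n₂) → ℤ) →ₐ[K]
      (AddMonoidAlgebra K (Fin n₁ → ℤ)) ⊗[K] (AddMonoidAlgebra K (Fin n₂ → ℤ)))
    (hθ : ∀ a : Fin (n₁ + n₂) → ℤ,
      θ (AddMonoidAlgebra.single a (1 : K)) =
        (((c₁ ^ (∑ i : Fin n₁, a (Fin.castAdd n₂ i)) *
           c₂ ^ (∑ j : Fin n₂, a (Fin.natAdd n₁ j)) : Kˣ) : K)) •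
          ((AddMonoidAlgebra.single (fun i => a (Fin.castAdd n₂ i)) (1 : K)) ⊗ₜ[K]
           (AddMonoidAlgebra.single (fun j => a (Fin.natAdd n₁ j)) (1 : K)))) :
    (∀ f ∈ symmSub K (n₁ + n₂),
      θ f ∈ (Algebra.TensorProduct.map (symmSub K n₁).val (symmSub K n₂).val).range) ∧
    Function.Injective (θ.comp (symmSub K (n₁ + n₂)).val) := by
  have hθ' : IsSubstitution c₁ c₂ θ.toLinearMap := hθ
  exact ⟨fun f hf => hθ'.mem_range_of_mem_symmSub hf, hθ'.injective.comp Subtype.val_injective⟩
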